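/- If F(t) ≤ F̂(t) + χ for every t ≥ 0, then the DKW-E-Lower output is a sound lower bound on the mean of μ: (1/k)·( (∑_{i=0}^{k−m−2} x_i) + (m+1−χk)·x_{k−m−1} ) ≤ ∫ x dμ(x), where the right-hand side is interpreted as the Lebesgue lower integral ∫⁻ ENNReal.ofReal x dμ in ℝ≥0∞. -/

import Mathlib

/-!
By the layer-cake formula the mean of `μ` is `∫₀^∞ μ (t, ∞) dt`, and on the DKW event
`μ (t, ∞) ≥ 1 - χ - F̂ t`. Writing each sample as `x i = ∫₀^∞ 𝟙[t < x i] dt`, the trimmed mean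
becomes the integral of a step function which, the samples being sorted, equals `1 - χ - F̂ t`
for `t < x n` and vanishes for `t ≥ x n`.
-/

open MeasureTheory Finset ENNReal

noncomputable def empiricalCDF {k : ℕ} (x : Fin k → ℝ) (t : ℝ) : ℝ :=
  (1 / (k : ℝ)) * #{i | x i ≤ t}

/-- For `n = k - ⌊χ k⌋₊ - 1` this is the DKW-E-Lower output; the weight of `x n` makes the total
weight `(1 - χ) k`. -/
noncomputable def trimmedMean {k : ℕ} (x : Fin k → ℝ) (χ : ℝ) (n : Fin k) : ℝ :=
  (1 / (k : ℝ)) * ((∑ i with i < n, x i) + ((1 - χ) * k - n) * x n)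

theorem ofReal_eq_setLIntegral_Ioi_indicator_Iio (a : ℝ) :
    ENNReal.ofReal a = ∫⁻ t in Set.Ioi 0, (Set.Iio a).indicator 1 t := by
  rw [lintegral_indicator_one measurableSet_Iio, Measure.restrict_apply measurableSet_Iio,
    Set.Iio_inter_Ioi, Real.volume_Ioo, sub_zero]

theorem card_filter_le_add_card_filter_lt_and_lt {k : ℕ} {x : Fin k → ℝ} (hx : Monotone x)
    {n : Fin k} {t : ℝ} (ht : t < x n) :
    #{i | x i ≤ t} + #{i | i < n ∧ t < x i} = n := by
  have hle : ({i | x i ≤ t} : Finset (Fin k)) = {i ∈ Iio n | x i ≤ t} := by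
    ext i
    simp only [mem_filter, mem_univ, true_and, mem_Iio, iff_and_self]
    exact fun hi => hx.reflect_lt (hi.trans_lt ht)
  have hlt : ({i | i < n ∧ t < x i} : Finset (Fin k)) = {i ∈ Iio n | ¬ x i ≤ t} := by
    ext i
    simp only [mem_filter, mem_univ, true_and, mem_Iio, not_le]
  rw [hle, hlt, card_filter_add_card_filter_not, Fin.card_Iio]

theorem trimmedMean_integrand_le {k : ℕ} {x : Fin k → ℝ} (hx : Monotone x) {χ : ℝ} {n : Fin k}
    (hn : (n : ℝ) ≤ (1 - χ) * k) (t : ℝ) :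
    ENNReal.ofReal (1 / k) * (∑ i with i < n, (Set.Iio (x i)).indicator 1 t
      + ENNReal.ofReal ((1 - χ) * k - n) * (Set.Iio (x n)).indicator 1 t)
      ≤ ENNReal.ofReal (1 - (empiricalCDF x t + χ)) := by
  simp only [Set.indicator_apply, Set.mem_Iio, Pi.one_apply, sum_boole, filter_filter]
  rcases lt_or_ge t (x n) with ht | ht
  · have hcard := card_filter_le_add_card_filter_lt_and_lt hx ht
    rw [if_pos ht, mul_one, ← ofReal_natCast, ← ofReal_add (by positivity) (by linarith),
      ← ofReal_mul (by positivity)]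
    refine (congrArg ENNReal.ofReal ?_).le
    have : (k : ℝ) ≠ 0 := Nat.cast_ne_zero.2 n.pos.ne'
    rw [empiricalCDF, ← hcard]
    field_simp
    push_cast
    ring
  · have hempty : ({i | i < n ∧ t < x i} : Finset (Fin k)) = ∅ :=
      filter_eq_empty_iff.2 fun i _ ⟨hi, hti⟩ => (hti.trans_le (hx hi.le)).not_ge ht
    simp [hempty, ht.not_gt]

theorem ofReal_trimmedMean_le {k : ℕ} {x : Fin k → ℝ} (hx : Monotone x) {χ : ℝ} {n : Fin k}
    (hn : (n : ℝ) ≤ (1 - χ) * k) :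
    ENNReal.ofReal (trimmedMean x χ n)
      ≤ ∫⁻ t in Set.Ioi 0, ENNReal.ofReal (1 - (empiricalCDF x t + χ)) := by
  have hind (a : ℝ) : Measurable ((Set.Iio a).indicator (1 : ℝ → ℝ≥0∞)) :=
    measurable_one.indicator measurableSet_Iio
  calc ENNReal.ofReal (trimmedMean x χ n)
      ≤ ENNReal.ofReal (1 / k) * (∑ i with i < n, ENNReal.ofReal (x i)
          + ENNReal.ofReal ((1 - χ) * k - n) * ENNReal.ofReal (x n)) := by
        rw [trimmedMean, ofReal_mul (by positivity)]
        gcongr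
        exact ofReal_add_le.trans (add_le_add
          (le_sum_of_subadditive _ ofReal_zero.le (fun _ _ => ofReal_add_le) _ _)
          (ofReal_mul (by linarith)).le)
    _ = ∫⁻ t in Set.Ioi 0, ENNReal.ofReal (1 / k) * (∑ i with i < n, (Set.Iio (x i)).indicator 1 t
          + ENNReal.ofReal ((1 - χ) * k - n) * (Set.Iio (x n)).indicator 1 t) := by
        simp only [ofReal_eq_setLIntegral_Ioi_indicator_Iio]
        rw [lintegral_const_mul _ (by fun_prop), lintegral_add_left (by fun_prop),
          lintegral_finsetSum _ (fun i _ => hind _), lintegral_const_mul _ (hind _)]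
    _ ≤ _ := lintegral_mono (trimmedMean_integrand_le hx hn)

theorem ofReal_one_sub_le_measure_Ioi {μ : Measure ℝ} [IsProbabilityMeasure μ] {t a : ℝ}
    (h : μ.real (Set.Iic t) ≤ a) : ENNReal.ofReal (1 - a) ≤ μ (Set.Ioi t) := by
  rw [← Set.compl_Iic, prob_compl_eq_one_sub measurableSet_Iic, ← ofReal_toReal (measure_ne_top μ _),
    ← ofReal_one, ← ofReal_sub _ ENNReal.toReal_nonneg]
  exact ofReal_le_ofReal (by rw [← measureReal_def]; linarith)

/-- Soundness of DKW-E-Lower: on the one-sided DKW event `F ≤ F̂ + χ` (on `[0,∞)`),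
the trimmed empirical average is a lower bound on the mean of `μ`. -/
theorem dkw_e_lower_sound
    (μ : Measure ℝ) [IsProbabilityMeasure μ] (hμ : μ (Set.Iio 0) = 0)
    (F : ℝ → ℝ) (hF : ∀ x, F x = (μ (Set.Iic x)).toReal)
    (k : ℕ)
    (x : Fin k → ℝ) (hmono : Monotone x)
    (Fhat : ℝ → ℝ)
    (hFhat : ∀ t : ℝ,
      Fhat t = (1 / (k : ℝ)) * (Finset.univ.filter (fun i : Fin k => x i ≤ t)).card)
    (χ : ℝ)
    (m : ℕ) (hm : m = ⌊χ * k⌋₊) (hmk : m + 1 ≤ k)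
    (hband : ∀ t : ℝ, 0 ≤ t → F t ≤ Fhat t + χ) :
    ENNReal.ofReal ((1 / (k : ℝ)) *
        ((∑ i ∈ Finset.univ.filter (fun i : Fin k => (i : ℕ) < k - m - 1), x i)
          + ((m : ℝ) + 1 - χ * k) * x ⟨k - m - 1, by omega⟩))
      ≤ ∫⁻ y, ENNReal.ofReal y ∂μ := by
  set n : Fin k := ⟨k - m - 1, by omega⟩
  have hn_cast : (n : ℝ) + m + 1 = k := by
    simp only [n]
    norm_cast
    omega
  have hweight : (m : ℝ) + 1 - χ * k = (1 - χ) * k - n := by linarith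
  have hn : (n : ℝ) ≤ (1 - χ) * k := by
    have : χ * k < m + 1 := hm ▸ Nat.lt_floor_add_one _
    linarith
  have hnonneg : 0 ≤ᵐ[μ] id := measure_mono_null (fun y (hy : ¬ 0 ≤ y) => not_le.1 hy) hμ
  calc _ = ENNReal.ofReal (trimmedMean x χ n) := by rw [hweight]; rfl
    _ ≤ ∫⁻ t in Set.Ioi 0, ENNReal.ofReal (1 - (empiricalCDF x t + χ)) :=
      ofReal_trimmedMean_le hmono hn
    _ ≤ ∫⁻ t in Set.Ioi 0, μ (Set.Ioi t) := by
      refine setLIntegral_mono' measurableSet_Ioi fun t ht => ofReal_one_sub_le_measure_Ioi ?_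
      rw [measureReal_def, ← hF, empiricalCDF, ← hFhat]
      exact hband t (le_of_lt ht)
    _ = ∫⁻ y, ENNReal.ofReal y ∂μ := (lintegral_eq_lintegral_meas_lt μ hnonneg aemeasurable_id).symm
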